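/- arXiv:1907.13392 — 2 statements merged into one kernel-verified Lean document; each statement's English description precedes it below -/
import Mathlib

section
/- Let H be a Hamiltonian on ℂ^D whose spectrum has non-degenerate gaps, with orthonormal eigenbasis |j⟩, and let A be an operator with ‖A‖ ≤ 1. For a unit vector |ψ⟩ with coefficients c_j = ⟨j|ψ⟩, the time-average fluctuation Δ = lim_{τ→∞}(1/τ)∫_0^τ |⟨ψ|A(t)|ψ⟩ - A^∞_ψ|² dt (where A(t) = e^{iHt}Ae^{-iHt} and A^∞_ψ = Σ_j |c_j|² A_{jj}) satisfies Δ ≤ Σ_j |c_j|⁴, i.e., Δ is bounded by the inverse effective dimension. -/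
/-!
In the eigenbasis of `H`, with `B = U† A U`, the fluctuation `⟨ψ|A(t)|ψ⟩ - A^∞_ψ` is the
trigonometric polynomial `∑_{j ≠ k} c̄_j c_k B_{jk} e^{i(E_j - E_k)t}`, whose frequencies are
pairwise distinct by the non-degenerate gap condition. The cross terms of its squared modulus
therefore average out, and the time average converges to `Δ = ∑_{j ≠ k} |c_j|² |c_k|² |B_{jk}|²`.
Bounding `|c_j|² |c_k|² ≤ (|c_j|⁴ + |c_k|⁴) / 2` and using that every row and every column of `B`
has squared ℓ²-norm at most `‖B‖² = ‖A‖² ≤ 1` gives `Δ ≤ ∑_j |c_j|⁴`.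
-/

open scoped Matrix
open Filter

open Complex ComplexConjugate Finset Topology

theorem tendsto_average_exp_mul_I (ω : ℝ) :
    Tendsto (fun τ : ℝ => (τ : ℂ)⁻¹ * ∫ t in (0 : ℝ)..τ, exp (I * ω * t)) atTop
      (𝓝 (if ω = 0 then 1 else 0)) := by
  split_ifs with hω
  · refine tendsto_const_nhds.congr' ?_
    filter_upwards [eventually_gt_atTop 0] with τ hτ
    simp [hω, inv_mul_cancel₀ (ofReal_ne_zero.2 hτ.ne')]
  · have hIω : I * ω ≠ 0 := mul_ne_zero I_ne_zero (ofReal_ne_zero.2 hω)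
    refine squeeze_zero_norm' (a := fun τ : ℝ => τ⁻¹ * (2 / ‖I * ω‖)) ?_
      (by simpa using tendsto_inv_atTop_zero.mul_const (2 / ‖I * (ω : ℂ)‖))
    filter_upwards [eventually_ge_atTop 0] with τ hτ
    have hbound : ‖exp (I * ω * τ) - exp (I * ω * (0 : ℝ))‖ ≤ 2 := by
      refine (norm_sub_le _ _).trans ?_
      have hunit : ∀ s : ℝ, ‖exp (I * ω * s)‖ = 1 := fun s => by simp [norm_exp]
      rw [hunit, hunit]; norm_num
    rw [integral_exp_mul_complex hIω, norm_mul, norm_div, norm_inv, norm_real,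
      Real.norm_of_nonneg hτ]
    exact mul_le_mul_of_nonneg_left (div_le_div_of_nonneg_right hbound (norm_nonneg _))
      (inv_nonneg.2 hτ)

theorem tendsto_average_sum_exp {ι : Type*} (s : Finset ι) (a : ι → ℂ) (ω : ι → ℝ) :
    Tendsto (fun τ : ℝ => (τ : ℂ)⁻¹ * ∫ t in (0 : ℝ)..τ, ∑ i ∈ s, a i * exp (I * ω i * t))
      atTop (𝓝 (∑ i ∈ s, if ω i = 0 then a i else 0)) := by
  have hint : ∀ τ : ℝ, ∀ i ∈ s,
      IntervalIntegrable (fun t : ℝ => a i * exp (I * ω i * t)) MeasureTheory.volume 0 τ :=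
    fun τ i _ => Continuous.intervalIntegrable (by fun_prop) _ _
  simp_rw [intervalIntegral.integral_finsetSum (hint _), intervalIntegral.integral_const_mul,
    mul_sum, mul_left_comm _ (a _)]
  refine tendsto_finsetSum _ fun i _ => ?_
  simpa using (tendsto_average_exp_mul_I (ω i)).const_mul (a i)

theorem norm_sq_sum_exp {ι : Type*} (s : Finset ι) (d : ι → ℂ) (w : ι → ℝ) (t : ℝ) :
    (‖∑ p ∈ s, d p * exp (I * w p * t)‖ : ℂ) ^ 2 =
      ∑ x ∈ s ×ˢ s, d x.1 * conj (d x.2) * exp (I * (w x.1 - w x.2 : ℝ) * t) := by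
  rw [← mul_conj', map_sum, sum_mul_sum, sum_product]
  refine sum_congr rfl fun p _ => sum_congr rfl fun q _ => ?_
  rw [map_mul, ← exp_conj, ← mul_mul_mul_comm, ← exp_add]
  congr 2
  simp only [map_mul, conj_I, conj_ofReal]
  push_cast
  ring

theorem tendsto_average_norm_sq_sum_exp {ι : Type*} (s : Finset ι) (d : ι → ℂ) (w : ι → ℝ)
    (hw : Set.InjOn w s) :
    Tendsto (fun τ : ℝ => τ⁻¹ * ∫ t in (0 : ℝ)..τ, ‖∑ p ∈ s, d p * exp (I * w p * t)‖ ^ 2)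
      atTop (𝓝 (∑ p ∈ s, ‖d p‖ ^ 2)) := by
  have hdiag : (∑ x ∈ s ×ˢ s, if w x.1 - w x.2 = 0 then d x.1 * conj (d x.2) else 0) =
      ((∑ p ∈ s, ‖d p‖ ^ 2 : ℝ) : ℂ) := by
    rw [sum_product, ofReal_sum]
    refine sum_congr rfl fun p hp => ?_
    rw [sum_eq_single_of_mem p hp, if_pos (sub_self _), mul_conj', ofReal_pow]
    intro q hq hqp
    exact if_neg fun h => hqp (hw hp hq (sub_eq_zero.1 h)).symm
  rw [← tendsto_ofReal_iff, ← hdiag]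
  refine (tendsto_average_sum_exp (s ×ˢ s) _ _).congr fun τ => ?_
  simp_rw [ofReal_mul, ofReal_inv, ← intervalIntegral.integral_ofReal, ofReal_pow,
    norm_sq_sum_exp]

namespace Matrix

variable {n : Type*} [Fintype n] [DecidableEq n]

theorem exp_smul_unitary_conj_diagonal (V : unitaryGroup n ℂ) (E : n → ℂ) (z : ℂ) :
    NormedSpace.exp (z • ((V : Matrix n n ℂ) * diagonal E * star (V : Matrix n n ℂ))) =
      V * diagonal (fun j => exp (z * E j)) * star (V : Matrix n n ℂ) := by
  have hinv : (V : Matrix n n ℂ)⁻¹ = star (V : Matrix n n ℂ) :=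
    inv_eq_left_inv (Unitary.star_mul_self_of_mem V.2)
  rw [← smul_mul_assoc, ← mul_smul_comm, ← diagonal_smul, ← hinv, exp_conj _ _ Unitary.isUnit_coe,
    exp_diagonal]
  congr 3
  ext j
  simp [← Complex.exp_eq_exp_ℂ]

omit [DecidableEq n] in
theorem star_dotProduct_mul_mul_star_mulVec {R : Type*} [CommSemiring R] [StarRing R]
    (V N : Matrix n n R) (ψ : n → R) :
    star ψ ⬝ᵥ (V * N * star V) *ᵥ ψ = star (star V *ᵥ ψ) ⬝ᵥ N *ᵥ (star V *ᵥ ψ) := by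
  rw [← mulVec_mulVec, ← mulVec_mulVec, dotProduct_mulVec, star_mulVec, star_eq_conjTranspose,
    conjTranspose_conjTranspose]

end Matrix

theorem Finset.sum_offDiag_eq_sum_sum_sub {ι M : Type*} [DecidableEq ι] [AddCommGroup M]
    (s : Finset ι) (f : ι → ι → M) :
    ∑ p ∈ s.offDiag, f p.1 p.2 = ∑ i ∈ s, ∑ j ∈ s, f i j - ∑ i ∈ s, f i i := by
  rw [← sum_product' s s f, ← diag_union_offDiag, sum_union (disjoint_diag_offDiag _), sum_diag]
  abel

section Heisenberg

variable {n : Type*} [Fintype n] [DecidableEq n]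

open Matrix

theorem dotProduct_exp_mul_mul_exp_mulVec {H : Matrix n n ℂ} (A : Matrix n n ℂ)
    {V : unitaryGroup n ℂ} {E : n → ℝ}
    (hH : H = (V : Matrix n n ℂ) * diagonal (fun j => (E j : ℂ)) * star (V : Matrix n n ℂ))
    (ψ : n → ℂ) (t : ℝ) :
    star ψ ⬝ᵥ (NormedSpace.exp ((I * t) • H) * A * NormedSpace.exp ((-(I * t)) • H)) *ᵥ ψ =
      ∑ j, ∑ k, star ((star (V : Matrix n n ℂ) *ᵥ ψ) j) * (star (V : Matrix n n ℂ) *ᵥ ψ) k *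
        (star (V : Matrix n n ℂ) * A * V) j k * exp (I * (E j - E k : ℝ) * t) := by
  have hconj : NormedSpace.exp ((I * t) • H) * A * NormedSpace.exp ((-(I * t)) • H) =
      V * (diagonal (fun j => exp (I * t * E j)) * (star (V : Matrix n n ℂ) * A * V) *
        diagonal (fun j => exp (-(I * t) * E j))) * star (V : Matrix n n ℂ) := by
    rw [hH, exp_smul_unitary_conj_diagonal, exp_smul_unitary_conj_diagonal]
    simp only [Matrix.mul_assoc]
  rw [hconj, star_dotProduct_mul_mul_star_mulVec]
  generalize star (V : Matrix n n ℂ) *ᵥ ψ = c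
  generalize star (V : Matrix n n ℂ) * A * V = B
  simp only [dotProduct, mulVec, mul_diagonal, diagonal_mul, mul_sum]
  refine sum_congr rfl fun j _ => sum_congr rfl fun k _ => ?_
  have hphase : I * ((E j - E k : ℝ) : ℂ) * t = I * t * E j + -(I * t) * E k := by
    push_cast
    ring
  rw [Pi.star_apply, hphase, exp_add]
  ring

theorem dotProduct_exp_mul_mul_exp_mulVec_sub_sum_diag {H : Matrix n n ℂ} (A : Matrix n n ℂ)
    {V : unitaryGroup n ℂ} {E : n → ℝ}
    (hH : H = (V : Matrix n n ℂ) * diagonal (fun j => (E j : ℂ)) * star (V : Matrix n n ℂ))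
    (ψ : n → ℂ) (t : ℝ) :
    star ψ ⬝ᵥ (NormedSpace.exp ((I * t) • H) * A * NormedSpace.exp ((-(I * t)) • H)) *ᵥ ψ -
        ∑ j, ((‖(star (V : Matrix n n ℂ) *ᵥ ψ) j‖ : ℝ) ^ 2 : ℂ) *
          (star (V : Matrix n n ℂ) * A * V) j j =
      ∑ p ∈ univ.offDiag, star ((star (V : Matrix n n ℂ) *ᵥ ψ) p.1) *
        (star (V : Matrix n n ℂ) *ᵥ ψ) p.2 * (star (V : Matrix n n ℂ) * A * V) p.1 p.2 *
          exp (I * (E p.1 - E p.2 : ℝ) * t) := by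
  rw [dotProduct_exp_mul_mul_exp_mulVec A hH]
  generalize star (V : Matrix n n ℂ) *ᵥ ψ = c
  generalize star (V : Matrix n n ℂ) * A * V = B
  rw [Finset.sum_offDiag_eq_sum_sum_sub univ
    fun j k => star (c j) * c k * B j k * exp (I * (E j - E k : ℝ) * t)]
  congr 1
  refine sum_congr rfl fun j _ => ?_
  rw [sub_self, ofReal_zero, mul_zero, zero_mul, exp_zero, mul_one, star_def, conj_mul']

end Heisenberg

theorem sum_sum_mul_mul_le_sum_sq {n : Type*} [Fintype n] (x : n → ℝ) (b : n → n → ℝ)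
    (hb : ∀ j k, 0 ≤ b j k) (hrow : ∀ j, ∑ k, b j k ≤ 1) (hcol : ∀ k, ∑ j, b j k ≤ 1) :
    ∑ j, ∑ k, x j * x k * b j k ≤ ∑ j, x j ^ 2 := by
  calc ∑ j, ∑ k, x j * x k * b j k
      ≤ ∑ j, ∑ k, (x j ^ 2 / 2 * b j k + x k ^ 2 / 2 * b j k) :=
        sum_le_sum fun j _ => sum_le_sum fun k _ => by
          nlinarith [two_mul_le_add_sq (x j) (x k), hb j k]
    _ = ∑ j, x j ^ 2 / 2 * ∑ k, b j k + ∑ k, x k ^ 2 / 2 * ∑ j, b j k := by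
        simp_rw [sum_add_distrib, mul_sum]
        rw [sum_comm (f := fun j k => x k ^ 2 / 2 * b j k)]
    _ ≤ ∑ j, x j ^ 2 / 2 + ∑ k, x k ^ 2 / 2 := by
        gcongr with j _ k _
        · exact mul_le_of_le_one_right (by positivity) (hrow j)
        · exact mul_le_of_le_one_right (by positivity) (hcol k)
    _ = ∑ j, x j ^ 2 := by rw [← sum_add_distrib]; simp

section L2OpNorm

open scoped Matrix.Norms.L2Operator

namespace Matrix

variable {𝕜 m n : Type*} [RCLike 𝕜] [Fintype m] [Fintype n] [DecidableEq n]

theorem sum_norm_sq_col_le_l2_opNorm_sq (M : Matrix m n 𝕜) (j : n) :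
    ∑ i, ‖M i j‖ ^ 2 ≤ ‖M‖ ^ 2 := by
  have h := l2_opNorm_mulVec M (EuclideanSpace.single j 1)
  rw [PiLp.norm_single, norm_one, mul_one] at h
  calc ∑ i, ‖M i j‖ ^ 2
      = ‖(EuclideanSpace.equiv m 𝕜).symm (M *ᵥ (EuclideanSpace.single j 1).ofLp)‖ ^ 2 := by
        rw [EuclideanSpace.norm_sq_eq]
        simp
    _ ≤ ‖M‖ ^ 2 := by gcongr

theorem sum_norm_sq_row_le_l2_opNorm_sq [DecidableEq m] (M : Matrix m n 𝕜) (i : m) :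
    ∑ j, ‖M i j‖ ^ 2 ≤ ‖M‖ ^ 2 := by
  simpa [l2_opNorm_conjTranspose] using sum_norm_sq_col_le_l2_opNorm_sq Mᴴ i

theorem norm_toEuclideanCLM_star_mul_mul (V : unitaryGroup n 𝕜) (A : Matrix n n 𝕜) :
    ‖toEuclideanCLM (𝕜 := 𝕜) (star (V : Matrix n n 𝕜) * A * (V : Matrix n n 𝕜))‖ =
      ‖toEuclideanCLM (𝕜 := 𝕜) A‖ :=
  (CStarRing.norm_mul_mem_unitary _ V.2).trans
    (CStarRing.norm_mem_unitary_mul _ (Unitary.star_mem V.2))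

end Matrix

theorem sum_offDiag_norm_sq_le_sum_norm_pow_four {𝕜 n : Type*} [RCLike 𝕜] [Fintype n]
    [DecidableEq n] (c : n → 𝕜) (B : Matrix n n 𝕜)
    (hB : ‖Matrix.toEuclideanCLM (𝕜 := 𝕜) B‖ ≤ 1) :
    ∑ p ∈ univ.offDiag, ‖star (c p.1) * c p.2 * B p.1 p.2‖ ^ 2 ≤ ∑ j, ‖c j‖ ^ 4 := by
  have hB2 : ‖B‖ ^ 2 ≤ 1 := pow_le_one₀ (norm_nonneg _) hB
  calc ∑ p ∈ univ.offDiag, ‖star (c p.1) * c p.2 * B p.1 p.2‖ ^ 2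
      ≤ ∑ p : n × n, ‖star (c p.1) * c p.2 * B p.1 p.2‖ ^ 2 :=
        sum_le_sum_of_subset_of_nonneg (subset_univ _) fun _ _ _ => by positivity
    _ = ∑ j, ∑ k, ‖c j‖ ^ 2 * ‖c k‖ ^ 2 * ‖B j k‖ ^ 2 := by
        simp [Fintype.sum_prod_type, mul_pow]
    _ ≤ ∑ j, (‖c j‖ ^ 2) ^ 2 :=
        sum_sum_mul_mul_le_sum_sq _ _ (fun _ _ => by positivity)
          (fun j => (B.sum_norm_sq_row_le_l2_opNorm_sq j).trans hB2)
          (fun k => (B.sum_norm_sq_col_le_l2_opNorm_sq k).trans hB2)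
    _ = ∑ j, ‖c j‖ ^ 4 := by simp_rw [← pow_mul]

end L2OpNorm

theorem statement8_general {D : ℕ} (H A : Matrix (Fin D) (Fin D) ℂ)
    (U : Matrix.unitaryGroup (Fin D) ℂ) (E : Fin D → ℝ)
    (hH : H = (U : Matrix (Fin D) (Fin D) ℂ) * Matrix.diagonal (fun j => (E j : ℂ)) *
      star (U : Matrix (Fin D) (Fin D) ℂ))
    (hgap : ∀ j k j' k' : Fin D, j ≠ k → E j - E k = E j' - E k' → j = j' ∧ k = k')
    (hA : ‖Matrix.toEuclideanCLM (𝕜 := ℂ) A‖ ≤ 1)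
    (ψ : Fin D → ℂ) :
    ∃ Δ : ℝ,
      Tendsto (fun τ : ℝ => τ⁻¹ * ∫ t in (0:ℝ)..τ,
          (‖
            ((star ψ ⬝ᵥ ((NormedSpace.exp ((Complex.I * (t : ℂ)) • H) * A *
                NormedSpace.exp ((-(Complex.I * (t : ℂ))) • H)).mulVec ψ)) -
              ∑ j, ((‖(star (U : Matrix (Fin D) (Fin D) ℂ)).mulVec ψ j‖ : ℝ) ^ 2 : ℂ) *
                (star (U : Matrix (Fin D) (Fin D) ℂ) * A * (U : Matrix (Fin D) (Fin D) ℂ)) j j)‖) ^ 2)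
        atTop (nhds Δ) ∧
      Δ ≤ ∑ j, ‖(star (U : Matrix (Fin D) (Fin D) ℂ)).mulVec ψ j‖ ^ 4 := by
  have hgaps :
      Set.InjOn (fun p : Fin D × Fin D => E p.1 - E p.2) (univ : Finset (Fin D)).offDiag :=
    fun p hp q _ h => Prod.ext_iff.2 (hgap p.1 p.2 q.1 q.2 (by simpa using hp) h)
  simp_rw [dotProduct_exp_mul_mul_exp_mulVec_sub_sum_diag A hH ψ]
  set c := (star (U : Matrix (Fin D) (Fin D) ℂ)).mulVec ψ
  set B := star (U : Matrix (Fin D) (Fin D) ℂ) * A * (U : Matrix (Fin D) (Fin D) ℂ)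
  exact ⟨_, tendsto_average_norm_sq_sum_exp (univ : Finset (Fin D)).offDiag
      (fun p => star (c p.1) * c p.2 * B p.1 p.2) (fun p => E p.1 - E p.2) hgaps,
    sum_offDiag_norm_sq_le_sum_norm_pow_four c B
      ((Matrix.norm_toEuclideanCLM_star_mul_mul U A).trans_le hA)⟩

/-- For `H = U diag(E) U†` with non-degenerate gaps and `‖A‖ ≤ 1`, for a unit vector `ψ` with
coefficients `c_j = ⟨j|ψ⟩`, the time-averaged fluctuation of `⟨ψ|A(t)|ψ⟩` around
`A^∞_ψ = Σ_j |c_j|² A_{jj}` exists and is bounded by the inverse effective dimension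
`Σ_j |c_j|⁴`. -/
theorem statement8 {D : ℕ} (H A : Matrix (Fin D) (Fin D) ℂ)
    (U : Matrix.unitaryGroup (Fin D) ℂ) (E : Fin D → ℝ)
    (hH : H = (U : Matrix (Fin D) (Fin D) ℂ) * Matrix.diagonal (fun j => (E j : ℂ)) *
      star (U : Matrix (Fin D) (Fin D) ℂ))
    (hgap : ∀ j k j' k' : Fin D, j ≠ k → E j - E k = E j' - E k' → j = j' ∧ k = k')
    (hA : ‖Matrix.toEuclideanCLM (𝕜 := ℂ) A‖ ≤ 1)
    (ψ : Fin D → ℂ) (hψ : star ψ ⬝ᵥ ψ = 1) :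
    ∃ Δ : ℝ,
      Tendsto (fun τ : ℝ => τ⁻¹ * ∫ t in (0:ℝ)..τ,
          (‖
            ((star ψ ⬝ᵥ ((NormedSpace.exp ((Complex.I * (t : ℂ)) • H) * A *
                NormedSpace.exp ((-(Complex.I * (t : ℂ))) • H)).mulVec ψ)) -
              ∑ j, ((‖(star (U : Matrix (Fin D) (Fin D) ℂ)).mulVec ψ j‖ : ℝ) ^ 2 : ℂ) *
                (star (U : Matrix (Fin D) (Fin D) ℂ) * A * (U : Matrix (Fin D) (Fin D) ℂ)) j j)‖) ^ 2)
        atTop (nhds Δ) ∧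
      Δ ≤ ∑ j, ‖(star (U : Matrix (Fin D) (Fin D) ℂ)).mulVec ψ j‖ ^ 4 :=
  statement8_general H A U E hH hgap hA ψ
end

section
/- Let a_1 ≤ a_2 ≤ ... ≤ a_D be real numbers with |a_j| ≤ K, and suppose that for every δ' > 0, |{j : a_j ≥ δ'}| ≤ D e^{-γ n δ'²} for constants γ, K > 0. Let m = |{j : a_j ≥ δ}| for some δ > 0, and suppose m δ ≤ Σ_{j=D-m+1}^D a_j. Then for any 1 ≤ m' ≤ m, δ ≤ sqrt(log(D/m')/(γ n)) + K m'/m. -/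
/-! If the tail counts decay like `D e^{-γ n δ'²}`, the `m'`-th largest value `a_{D-m'}` is at most
`t = sqrt(log(D/m')/(γ n))`, since at least `m'` values are `≥ a_{D-m'}`. Splitting the top `m`
values into the top `m'` (each `≤ K`) and the other `m - m'` (each `≤ a_{D-m'} ≤ t`) bounds their
sum, which is at least `m δ`, by `m t + m' K`. -/

open Finset Real

lemma le_sqrt_log_div_of_le_mul_exp {M D c x : ℝ} (hM : 0 < M) (hc : 0 < c)
    (h : M ≤ D * exp (-c * x ^ 2)) : x ≤ √(log (D / M) / c) := by
  have hD : 0 < D := pos_of_mul_pos_left (hM.trans_le h) (exp_pos _).le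
  have hlog : log M ≤ log D + -c * x ^ 2 := by
    simpa [log_mul hD.ne' (exp_pos _).ne'] using log_le_log hM h
  have hsq : x ^ 2 ≤ log (D / M) / c := by
    rw [le_div_iff₀ hc, log_div hD.ne' hM.ne']
    linarith
  exact (le_abs_self x).trans (abs_le_sqrt hsq)

lemma le_card_filter_apply_sub_le {a : ℕ → ℝ} {D k : ℕ} (hmono : MonotoneOn a (Set.Iio D))
    (hkD : k ≤ D) : k ≤ #{j ∈ range D | a (D - k) ≤ a j} := by
  have hsub : Ico (D - k) D ⊆ {j ∈ range D | a (D - k) ≤ a j} := fun j hj => by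
    rw [mem_Ico] at hj
    rw [mem_filter, mem_range]
    exact ⟨hj.2, hmono (Set.mem_Iio.2 (by omega)) (Set.mem_Iio.2 hj.2) hj.1⟩
  simpa [Nat.card_Ico, Nat.sub_sub_self hkD] using card_le_card hsub

lemma apply_sub_le_sqrt_log_of_card_filter_le {a : ℕ → ℝ} {D k : ℕ} {c : ℝ} (hc : 0 < c)
    (hmono : MonotoneOn a (Set.Iio D))
    (htail : ∀ x : ℝ, 0 < x → (#{j ∈ range D | x ≤ a j} : ℝ) ≤ D * exp (-c * x ^ 2))
    (hk : 0 < k) (hkD : k ≤ D) : a (D - k) ≤ √(log (D / k) / c) := by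
  rcases le_or_gt (a (D - k)) 0 with hneg | hpos
  · exact hneg.trans (sqrt_nonneg _)
  · refine le_sqrt_log_div_of_le_mul_exp (by exact_mod_cast hk) hc ?_
    exact (Nat.cast_le.2 (le_card_filter_apply_sub_le hmono hkD)).trans (htail _ hpos)

lemma sum_Ico_sub_le_of_monotoneOn {a : ℕ → ℝ} {D m k : ℕ} {K : ℝ}
    (hmono : MonotoneOn a (Set.Iio D)) (hK : ∀ j < D, a j ≤ K)
    (hk : 0 < k) (hkm : k ≤ m) (hmD : m ≤ D) :
    ∑ j ∈ Ico (D - m) D, a j ≤ (m - k : ℝ) * a (D - k) + k * K := by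
  rw [← sum_Ico_consecutive a (Nat.sub_le_sub_left hkm D) (Nat.sub_le D k)]
  have hlow : ∑ j ∈ Ico (D - m) (D - k), a j ≤ #(Ico (D - m) (D - k)) • a (D - k) :=
    sum_le_card_nsmul _ _ _ fun j hj => by
      rw [mem_Ico] at hj
      exact hmono (Set.mem_Iio.2 (by omega)) (Set.mem_Iio.2 (by omega)) hj.2.le
  have hhigh : ∑ j ∈ Ico (D - k) D, a j ≤ #(Ico (D - k) D) • K :=
    sum_le_card_nsmul _ _ _ fun j hj => hK j (mem_Ico.1 hj).2
  rw [Nat.card_Ico, nsmul_eq_mul, tsub_tsub_tsub_cancel_left hmD,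
    Nat.cast_sub hkm] at hlow
  rw [Nat.card_Ico, nsmul_eq_mul, Nat.sub_sub_self (hkm.trans hmD)] at hhigh
  exact add_le_add hlow hhigh

theorem statement13_general (D n : ℕ) (hn : 1 ≤ n) (a : ℕ → ℝ) (K γ δ : ℝ)
    (hγ : 0 < γ)
    (hbound : ∀ j < D, |a j| ≤ K)
    (hmono : ∀ i j : ℕ, i ≤ j → j < D → a i ≤ a j)
    (htail : ∀ δ' : ℝ, 0 < δ' →
      (((Finset.range D).filter fun j => δ' ≤ a j).card : ℝ) ≤ (D : ℝ) * Real.exp (-γ * n * δ' ^ 2))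
    (m : ℕ) (hm : m = ((Finset.range D).filter fun j => δ ≤ a j).card)
    (hsum : (m : ℝ) * δ ≤ ∑ j ∈ Finset.Ico (D - m) D, a j) :
    ∀ m' : ℕ, 1 ≤ m' → m' ≤ m →
      δ ≤ Real.sqrt (Real.log ((D : ℝ) / (m' : ℝ)) / (γ * n)) + K * (m' : ℝ) / (m : ℝ) := by
  intro m' hm'1 hm'm
  have hmono' : MonotoneOn a (Set.Iio D) := fun i _ j hj hij => hmono i j hij hj
  have hmD : m ≤ D := hm ▸ (card_filter_le _ _).trans (card_range D).le
  have hmpos : (0 : ℝ) < m := by exact_mod_cast hm'1.trans hm'm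
  have hγn : 0 < γ * n := mul_pos hγ (by exact_mod_cast hn)
  set t := √(log (D / m') / (γ * n))
  have ht : a (D - m') ≤ t := by
    refine apply_sub_le_sqrt_log_of_card_filter_le hγn hmono' (fun x hx => ?_)
      hm'1 (hm'm.trans hmD)
    simpa only [neg_mul] using htail x hx
  have hsplit := sum_Ico_sub_le_of_monotoneOn hmono' (fun j hj => (abs_le.1 (hbound j hj)).2)
    hm'1 hm'm hmD
  have hm'm_real : (m' : ℝ) ≤ m := by exact_mod_cast hm'm
  have hmain : m * δ ≤ m * t + m' * K := by
    linarith [mul_le_mul_of_nonneg_left ht (sub_nonneg.2 hm'm_real),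
      mul_nonneg (Nat.cast_nonneg m') (sqrt_nonneg _ : 0 ≤ t)]
  calc δ = m * δ / m := by field_simp
    _ ≤ (m * t + m' * K) / m := by gcongr
    _ = t + K * m' / m := by field_simp

/-- Tail-count bound for ordered bounded reals: if `|a_j| ≤ K`, `a` is monotone on
`{0,...,D-1}`, the tail counts satisfy `|{j < D : a_j ≥ δ'}| ≤ D e^{-γ n δ'²}`, and the top
`m = |{j < D : a_j ≥ δ}|` values sum to at least `mδ`, then for any `1 ≤ m' ≤ m`,
`δ ≤ sqrt(log(D/m')/(γn)) + K m'/m`. -/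
theorem statement13 (D n : ℕ) (hD : 1 ≤ D) (hn : 1 ≤ n) (a : ℕ → ℝ) (K γ δ : ℝ)
    (hK : 0 < K) (hγ : 0 < γ) (hδ : 0 < δ)
    (hbound : ∀ j < D, |a j| ≤ K)
    (hmono : ∀ i j : ℕ, i ≤ j → j < D → a i ≤ a j)
    (htail : ∀ δ' : ℝ, 0 < δ' →
      (((Finset.range D).filter fun j => δ' ≤ a j).card : ℝ) ≤ (D : ℝ) * Real.exp (-γ * n * δ' ^ 2))
    (m : ℕ) (hm : m = ((Finset.range D).filter fun j => δ ≤ a j).card)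
    (hsum : (m : ℝ) * δ ≤ ∑ j ∈ Finset.Ico (D - m) D, a j) :
    ∀ m' : ℕ, 1 ≤ m' → m' ≤ m →
      δ ≤ Real.sqrt (Real.log ((D : ℝ) / (m' : ℝ)) / (γ * n)) + K * (m' : ℝ) / (m : ℝ) :=
  statement13_general D n hn a K γ δ hγ hbound hmono htail m hm hsum
end
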